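/- Let f : C → D and g : D → C be chain maps of R-module chain complexes. Then the induced maps f_* : T(gf) → T(fg) and g_* : T(fg) → T(gf) between algebraic mapping tori are quasi-isomorphisms. -/

import Mathlib

open CategoryTheory LaurentPolynomial

/-- Degreewise scalar multiplication by `a` as a chain self-map. -/
def smulChainMap {A : Type*} [CommRing A] {ι : Type*} {c : ComplexShape ι} (a : A)
    (K : HomologicalComplex (ModuleCat A) c) : K ⟶ K where
  f n := ModuleCat.ofHom (a • LinearMap.id)
  comm' := by
    intro i j _
    ext x
    show (K.d i j) (a • x) = a • (K.d i j) x
    exact (K.d i j).hom.map_smul a x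

/-!
Write `t` for multiplication by `T`, so that `T(gf)` is the cone of `w₁ = gf - t` and `T(fg)` the
cone of `w₂ = fg - t`. The composite `g_* ∘ f_*` is the map of cones induced by the square
`(gf, gf)` on `w₁`, and `gf = w₁ ≫ 𝟙 + t`: two squares differing by a diagonal `h` induce
homotopic maps of cones, so `g_* ∘ f_*` is homotopic to the map induced by `(t, t)`, which is an
isomorphism since `T` is a unit. Symmetrically `f_* ∘ g_*` is a quasi-isomorphism, and the
two-out-of-six property of isomorphisms in homology gives that `f_*` and `g_*` are.
-/

section smulChainMap

variable {A : Type*} [CommRing A] {ι : Type*} {c : ComplexShape ι}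

lemma smulChainMap_naturality (a : A) {K L : HomologicalComplex (ModuleCat A) c} (φ : K ⟶ L) :
    smulChainMap a K ≫ φ = φ ≫ smulChainMap a L := by
  ext n x
  exact (φ.f n).hom.map_smul a x

lemma smulChainMap_comp_smulChainMap (a b : A) (K : HomologicalComplex (ModuleCat A) c) :
    smulChainMap a K ≫ smulChainMap b K = smulChainMap (b * a) K := by
  ext n x
  exact smul_smul b a x

lemma smulChainMap_one (K : HomologicalComplex (ModuleCat A) c) : smulChainMap (1 : A) K = 𝟙 K := by
  ext n x
  exact one_smul A x

lemma isIso_smulChainMap {a : A} (ha : IsUnit a) (K : HomologicalComplex (ModuleCat A) c) :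
    IsIso (smulChainMap a K) := by
  obtain ⟨u, rfl⟩ := ha
  refine ⟨smulChainMap ↑u⁻¹ K, ?_, ?_⟩ <;>
    simp [smulChainMap_comp_smulChainMap, smulChainMap_one]

end smulChainMap

lemma isIso_of_isIso_comp_of_isIso_comp {C : Type*} [Category C] {X Y : C} (f : X ⟶ Y)
    (g : Y ⟶ X) [IsIso (f ≫ g)] [IsIso (g ≫ f)] : IsIso f :=
  have : Mono f := mono_of_mono f g
  have : IsSplitEpi f := IsSplitEpi.mk' ⟨inv (g ≫ f) ≫ g, by simp⟩
  isIso_of_mono_of_isSplitEpi f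

namespace HomologicalComplex

variable {C : Type*} [Category C] [Preadditive C] [CategoryWithHomology C]
  {ι : Type*} {c : ComplexShape ι}

lemma quasiIso_iff_of_homotopy {K L : HomologicalComplex C c} {f g : K ⟶ L}
    (h : Homotopy f g) : QuasiIso f ↔ QuasiIso g := by
  simp only [quasiIso_iff, quasiIsoAt_iff_isIso_homologyMap, h.homologyMap_eq]

lemma quasiIso_of_quasiIso_comp_of_quasiIso_comp {K L : HomologicalComplex C c}
    (f : K ⟶ L) (g : L ⟶ K) [QuasiIso (f ≫ g)] [QuasiIso (g ≫ f)] : QuasiIso f := by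
  rw [quasiIso_iff]
  intro i
  rw [quasiIsoAt_iff_isIso_homologyMap]
  have : IsIso (homologyMap f i ≫ homologyMap g i) := by
    rw [← homologyMap_comp]; infer_instance
  have : IsIso (homologyMap g i ≫ homologyMap f i) := by
    rw [← homologyMap_comp]; infer_instance
  exact isIso_of_isIso_comp_of_isIso_comp _ (homologyMap g i)

end HomologicalComplex

namespace CochainComplex.mappingCone

open Limits HomComplex

variable {C : Type*} [Category C] [Preadditive C] [HasBinaryBiproducts C]

section

variable {K₁ L₁ K₂ L₂ : CochainComplex C ℤ} {φ₁ : K₁ ⟶ L₁} {φ₂ : K₂ ⟶ L₂}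

noncomputable def homotopyMapOfDiagonal {a a' : K₁ ⟶ K₂} {b b' : L₁ ⟶ L₂}
    (comm : φ₁ ≫ b = a ≫ φ₂) (comm' : φ₁ ≫ b' = a' ≫ φ₂) (h : L₁ ⟶ K₂)
    (ha : a = φ₁ ≫ h + a') (hb : b = h ≫ φ₂ + b') :
    Homotopy (map φ₁ φ₂ a b comm) (map φ₁ φ₂ a' b' comm') :=
  (Cochain.equivHomotopy _ _).symm ⟨(snd φ₁).comp ((Cochain.ofHom h).comp (inl φ₂) (zero_add _))
      (zero_add (-1)), by
    subst ha hb
    ext n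
    simp [ext_from_iff _ (n + 1) n rfl, map, δ_zero_cochain_comp _ _ _ (neg_add_cancel 1),
      Cochain.comp_v _ _ (add_neg_cancel 1) n (n + 1) n rfl (by omega)]⟩

lemma isIso_map {a : K₁ ⟶ K₂} {b : L₁ ⟶ L₂} [IsIso a] [IsIso b] (comm : φ₁ ≫ b = a ≫ φ₂) :
    IsIso (map φ₁ φ₂ a b comm) := by
  have comm' : φ₂ ≫ inv b = inv a ≫ φ₁ := by
    rw [← cancel_epi a, ← reassoc_of% comm]
    simp
  refine ⟨map φ₂ φ₁ (inv a) (inv b) comm', ?_, ?_⟩ <;> simp [← map_comp, map_id]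

end

variable [CategoryWithHomology C]

lemma quasiIso_map_of_eq_add_isIso {K : CochainComplex C ℤ} {w a : K ⟶ K} (t : K ⟶ K) [IsIso t]
    (ha : a = w + t) (comm : w ≫ a = a ≫ w) : QuasiIso (map w w a a comm) := by
  have comm' : w ≫ t = t ≫ w := by
    simpa [ha, Preadditive.comp_add, Preadditive.add_comp] using comm
  have := isIso_map comm'
  exact (HomologicalComplex.quasiIso_iff_of_homotopy
    (homotopyMapOfDiagonal comm comm' (𝟙 K) (by simpa using ha) (by simpa using ha))).2
      inferInstance

lemma quasiIso_map_of_comp_sub_isIso {K L : CochainComplex C ℤ} (p : K ⟶ L) (q : L ⟶ K)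
    (t₁ : K ⟶ K) (t₂ : L ⟶ L) [IsIso t₁] [IsIso t₂]
    (hq : t₂ ≫ q = q ≫ t₁) {w₁ : K ⟶ K} {w₂ : L ⟶ L} (hw₁ : w₁ = p ≫ q - t₁)
    (hw₂ : w₂ = q ≫ p - t₂) (comm : w₁ ≫ p = p ≫ w₂) : QuasiIso (map w₁ w₂ p p comm) := by
  have comm' : w₂ ≫ q = q ≫ w₁ := by
    simp [hw₁, hw₂, Preadditive.sub_comp, Preadditive.comp_sub, hq]
  have : QuasiIso (map w₁ w₂ p p comm ≫ map w₂ w₁ q q comm') := by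
    rw [← map_comp]
    exact quasiIso_map_of_eq_add_isIso t₁ (by rw [hw₁, sub_add_cancel]) _
  have : QuasiIso (map w₂ w₁ q q comm' ≫ map w₁ w₂ p p comm) := by
    rw [← map_comp]
    exact quasiIso_map_of_eq_add_isIso t₂ (by rw [hw₂, sub_add_cancel]) _
  exact HomologicalComplex.quasiIso_of_quasiIso_comp_of_quasiIso_comp _ (map w₂ w₁ q q comm')

end CochainComplex.mappingCone

/-- Mather's mapping torus trick: For chain maps `f : C → D` and
`g : D → C` of `R`-module chain complexes, the induced maps
`f_* : T(gf) → T(fg)` and `g_* : T(fg) → T(gf)` of algebraic mapping tori are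
quasi-isomorphisms. -/
theorem stmt7 (R : Type*) [CommRing R] (C D : CochainComplex (ModuleCat R) ℤ)
    (f : C ⟶ D) (g : D ⟶ C) :
    ∀ (w₁ : ((ModuleCat.extendScalars
            (algebraMap R (LaurentPolynomial R))).mapHomologicalComplex
              (ComplexShape.up ℤ)).obj C ⟶
          ((ModuleCat.extendScalars
            (algebraMap R (LaurentPolynomial R))).mapHomologicalComplex
              (ComplexShape.up ℤ)).obj C)
      (w₂ : ((ModuleCat.extendScalars
            (algebraMap R (LaurentPolynomial R))).mapHomologicalComplex
              (ComplexShape.up ℤ)).obj D ⟶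
          ((ModuleCat.extendScalars
            (algebraMap R (LaurentPolynomial R))).mapHomologicalComplex
              (ComplexShape.up ℤ)).obj D),
      -- `w₁` defines the torus `T(gf)` of `g ∘ f : C ⟶ C`
      w₁ = ((ModuleCat.extendScalars
            (algebraMap R (LaurentPolynomial R))).mapHomologicalComplex
              (ComplexShape.up ℤ)).map (f ≫ g) - smulChainMap (T 1) _ →
      -- `w₂` defines the torus `T(fg)` of `f ∘ g : D ⟶ D`
      w₂ = ((ModuleCat.extendScalars
            (algebraMap R (LaurentPolynomial R))).mapHomologicalComplex
              (ComplexShape.up ℤ)).map (g ≫ f) - smulChainMap (T 1) _ →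
      (∀ comm₁ : w₁ ≫ ((ModuleCat.extendScalars
            (algebraMap R (LaurentPolynomial R))).mapHomologicalComplex
              (ComplexShape.up ℤ)).map f =
          ((ModuleCat.extendScalars
            (algebraMap R (LaurentPolynomial R))).mapHomologicalComplex
              (ComplexShape.up ℤ)).map f ≫ w₂,
        QuasiIso (CochainComplex.mappingCone.map w₁ w₂
          (((ModuleCat.extendScalars
            (algebraMap R (LaurentPolynomial R))).mapHomologicalComplex
              (ComplexShape.up ℤ)).map f)
          (((ModuleCat.extendScalars
            (algebraMap R (LaurentPolynomial R))).mapHomologicalComplex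
              (ComplexShape.up ℤ)).map f) comm₁)) ∧
      (∀ comm₂ : w₂ ≫ ((ModuleCat.extendScalars
            (algebraMap R (LaurentPolynomial R))).mapHomologicalComplex
              (ComplexShape.up ℤ)).map g =
          ((ModuleCat.extendScalars
            (algebraMap R (LaurentPolynomial R))).mapHomologicalComplex
              (ComplexShape.up ℤ)).map g ≫ w₁,
        QuasiIso (CochainComplex.mappingCone.map w₂ w₁
          (((ModuleCat.extendScalars
            (algebraMap R (LaurentPolynomial R))).mapHomologicalComplex
              (ComplexShape.up ℤ)).map g)
          (((ModuleCat.extendScalars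
            (algebraMap R (LaurentPolynomial R))).mapHomologicalComplex
              (ComplexShape.up ℤ)).map g) comm₂)) := by
  intro w₁ w₂ hw₁ hw₂
  have (K : CochainComplex (ModuleCat R[T;T⁻¹]) ℤ) : IsIso (smulChainMap (T 1) K) :=
    isIso_smulChainMap (isUnit_T 1) K
  rw [Functor.map_comp] at hw₁ hw₂
  exact ⟨CochainComplex.mappingCone.quasiIso_map_of_comp_sub_isIso _ _ _ _
      (smulChainMap_naturality _ _) hw₁ hw₂,
    CochainComplex.mappingCone.quasiIso_map_of_comp_sub_isIso _ _ _ _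
      (smulChainMap_naturality _ _) hw₂ hw₁⟩
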